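/- arXiv:1206.5581 — 3 statements merged into one kernel-verified Lean document; each statement's English description precedes it below -/
import Mathlib

section
/- If a topological space (X, τ) admits a Kuratowski partition, then the metrizable space X(τ) also admits a Kuratowski partition; namely, the family of preimages {φ⁻¹[F] : F ∈ ℱ} of a Kuratowski partition ℱ of X under a choice function φ (with φ(x) ∈ ⋂_n x(n)) is a Kuratowski partition of X(τ). -/
open Set Topology

/-- The set of nonempty open subsets of `X` (denoted `τ⁺` in the paper). -/
abbrev PosOpen (X : Type) [TopologicalSpace X] : Type :=
  {U : Set X // IsOpen U ∧ U.Nonempty}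

/-- `τ⁺` carries the discrete topology. -/
instance (priority := high) PosOpen.topology (X : Type) [TopologicalSpace X] :
    TopologicalSpace (PosOpen X) := ⊥

/-- `X(τ) = {x ∈ (τ⁺)^ω : ⋂ₙ x(n) ≠ ∅}`, a subspace of the product `(τ⁺)^ω`. -/
abbrev SeqSpace (X : Type) [TopologicalSpace X] : Type :=
  {x : ℕ → PosOpen X // (⋂ n, ((x n).1 : Set X)).Nonempty}

/-- A Kuratowski partition of a topological space: a partition into meager sets
such that the union of every subfamily has the Baire property. -/
def IsKurPartition (Y : Type) [TopologicalSpace Y] (F : Set (Set Y)) : Prop :=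
  ⋃₀ F = Set.univ ∧ F.PairwiseDisjoint id ∧ (∀ s ∈ F, IsMeagre s) ∧
    ∀ F' ⊆ F, ∃ U : Set Y, IsOpen U ∧ IsMeagre (symmDiff (⋃₀ F') U)

/-!
Pulling back along `φ` preserves partitions, so it suffices that `φ⁻¹` maps nowhere dense sets
to nowhere dense sets and open sets to sets with the Baire property; meagreness and the Baire
property then transfer through countable unions and symmetric differences.

Both facts rest on one observation: a basic open set of `X(τ)` fixes finitely many coordinates
`x 0, …, x (n-1)`, and any nonempty open `W ⊆ x 0 ∩ … ∩ x (n-1)` may be put in coordinate `n`,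
which yields a smaller basic open set on which `φ` takes values in `W`. Metrizability holds
because `X(τ)` is a subspace of a countable power of a discrete space.
-/

theorem isNowhereDense_of_forall_exists_disjoint {Y : Type*} [TopologicalSpace Y] {s : Set Y}
    (h : ∀ O, IsOpen O → O.Nonempty → ∃ O' ⊆ O, IsOpen O' ∧ O'.Nonempty ∧ Disjoint O' s) :
    IsNowhereDense s := by
  rw [IsNowhereDense, ← not_nonempty_iff_eq_empty]
  intro hne
  obtain ⟨O', hO'O, hO', ⟨y, hy⟩, hO's⟩ := h _ isOpen_interior hne
  obtain ⟨z, hzO', hzs⟩ := mem_closure_iff.mp (interior_subset (hO'O hy)) O' hO' hy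
  exact disjoint_left.mp hO's hzO' hzs

section Preimage

variable {X Y : Type} [TopologicalSpace X] [TopologicalSpace Y] {f : Y → X}

theorem IsMeagre.preimage_of_isNowhereDense
    (hf : ∀ s, IsNowhereDense s → IsNowhereDense (f ⁻¹' s)) {s : Set X} (hs : IsMeagre s) :
    IsMeagre (f ⁻¹' s) := by
  rw [isMeagre_iff_countable_union_isNowhereDense] at hs ⊢
  obtain ⟨S, hS, hSc, hsS⟩ := hs
  refine ⟨(fun t => f ⁻¹' t) '' S, forall_mem_image.2 fun t ht => hf t (hS t ht),
    hSc.image _, ?_⟩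
  rw [sUnion_image, ← preimage_sUnion]
  exact preimage_mono hsS

theorem IsKurPartition.preimage (hnd : ∀ s, IsNowhereDense s → IsNowhereDense (f ⁻¹' s))
    (hopen : ∀ U, IsOpen U → ∃ V, IsOpen V ∧ IsMeagre (symmDiff (f ⁻¹' U) V))
    {F : Set (Set X)} (hF : IsKurPartition X F) :
    IsKurPartition Y ((fun s => f ⁻¹' s) '' F) := by
  obtain ⟨hcover, hdisj, hmeagre, hbaire⟩ := hF
  refine ⟨?_, ?_, forall_mem_image.2 fun s hs => (hmeagre s hs).preimage_of_isNowhereDense hnd,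
    fun F' hF' => ?_⟩
  · rw [sUnion_image, ← preimage_sUnion, hcover, preimage_univ]
  · rintro _ ⟨s, hs, rfl⟩ _ ⟨t, ht, rfl⟩ hst
    exact (hdisj hs ht fun h => hst (h ▸ rfl)).preimage f
  · set G := {s ∈ F | f ⁻¹' s ∈ F'}
    have hF'G : ⋃₀ F' = f ⁻¹' ⋃₀ G := by
      ext y
      constructor
      · rintro ⟨_, ht, hy⟩
        obtain ⟨s, hs, rfl⟩ := hF' ht
        exact ⟨s, ⟨hs, ht⟩, hy⟩
      · rintro ⟨s, ⟨-, hs⟩, hy⟩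
        exact ⟨_, hs, hy⟩
    obtain ⟨U, hU, hGU⟩ := hbaire G (sep_subset _ _)
    obtain ⟨V, hV, hUV⟩ := hopen U hU
    refine ⟨V, hV, (IsMeagre.union ?_ hUV).mono (symmDiff_triangle _ (f ⁻¹' U) _)⟩
    rw [hF'G, ← preimage_symmDiff]
    exact hGU.preimage_of_isNowhereDense hnd

end Preimage

namespace SeqSpace

open PiNat

variable {X : Type} [TopologicalSpace X]

instance : DiscreteTopology (PosOpen X) := ⟨rfl⟩

instance : TopologicalSpace.MetrizableSpace (SeqSpace X) :=
  letI : MetricSpace (PosOpen X) := TopologicalSpace.metrizableSpaceMetric _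
  letI : MetricSpace (ℕ → PosOpen X) := PiCountable.metricSpace
  IsEmbedding.subtypeVal.metrizableSpace

theorem exists_forall_subset_exists_coord_eq {O : Set (SeqSpace X)} (hO : IsOpen O)
    (hne : O.Nonempty) :
    ∃ C : Set X, IsOpen C ∧ C.Nonempty ∧ ∀ W : Set X, IsOpen W → W.Nonempty → W ⊆ C →
      ∃ O' ⊆ O, IsOpen O' ∧ O'.Nonempty ∧ ∃ m, ∀ z ∈ O', ((z.1 m).1 : Set X) = W := by
  obtain ⟨x, hxO⟩ := hne
  obtain ⟨T, hT, rfl⟩ := isOpen_induced_iff.mp hO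
  obtain ⟨_, ⟨y, n, rfl⟩, hxy, hyT⟩ :=
    (isTopologicalBasis_cylinders fun _ => PosOpen X).exists_subset_of_mem_open hxO hT
  rw [mem_cylinder_iff_eq] at hxy
  refine ⟨⋂ i ∈ Finset.range n, ((x.1 i).1 : Set X),
    isOpen_biInter_finset fun i _ => (x.1 i).2.1, x.2.mono fun p hp => ?_, ?_⟩
  · exact mem_iInter₂.2 fun i _ => mem_iInter.1 hp i
  intro W hW hWne hWC
  set x' : ℕ → PosOpen X := fun i => if i < n then x.1 i else ⟨W, hW, hWne⟩
  have hx'x : x' ∈ cylinder x.1 n := fun i hi => if_pos hi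
  have hWx' : W ⊆ ⋂ i, ((x' i).1 : Set X) := fun w hw => mem_iInter.2 fun i => by
    by_cases hi : i < n
    · simpa [x', hi] using mem_iInter₂.1 (hWC hw) i (Finset.mem_range.2 hi)
    · simpa [x', hi] using hw
  refine ⟨Subtype.val ⁻¹' cylinder x' (n + 1), fun z hz => hyT ?_,
    (isOpen_cylinder _ x' _).preimage continuous_subtype_val,
    ⟨⟨x', hWne.mono hWx'⟩, self_mem_cylinder _ _⟩, n, fun z hz => ?_⟩
  · rw [← hxy, ← mem_cylinder_iff_eq.1 hx'x]
    exact cylinder_anti _ n.le_succ hz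
  · simp [mem_cylinder_iff.1 hz n n.lt_succ_self, x']

variable {φ : SeqSpace X → X} (hφ : ∀ x : SeqSpace X, φ x ∈ ⋂ n, ((x.1 n).1 : Set X))
include hφ

theorem isNowhereDense_preimage {s : Set X} (hs : IsNowhereDense s) :
    IsNowhereDense (φ ⁻¹' s) := by
  refine isNowhereDense_of_forall_exists_disjoint fun O hO hne => ?_
  obtain ⟨C, hC, hCne, hCW⟩ := exists_forall_subset_exists_coord_eq hO hne
  have hCs : (C \ closure s).Nonempty := by
    rw [sdiff_nonempty]
    exact fun hCs => (hCne.mono (interior_maximal hCs hC)).ne_empty hs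
  obtain ⟨O', hO'O, hO', hO'ne, m, hm⟩ :=
    hCW _ (hC.sdiff isClosed_closure) hCs sdiff_subset
  refine ⟨O', hO'O, hO', hO'ne, disjoint_left.2 fun z hz hzs => ?_⟩
  have := hm z hz ▸ mem_iInter.1 (hφ z) m
  exact this.2 (subset_closure hzs)

theorem exists_isOpen_isMeagre_symmDiff_preimage {U : Set X} (hU : IsOpen U) :
    ∃ V, IsOpen V ∧ IsMeagre (symmDiff (φ ⁻¹' U) V) := by
  set V := {z : SeqSpace X | ∃ m, ((z.1 m).1 : Set X) ⊆ U}
  have hV : IsOpen V := by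
    simp only [V, ofPred_exists]
    have hcoord (m : ℕ) : Continuous fun z : SeqSpace X => z.1 m :=
      (continuous_apply m).comp continuous_subtype_val
    exact isOpen_iUnion fun m => (isOpen_discrete {P : PosOpen X | P.1 ⊆ U}).preimage (hcoord m)
  have hVU : V ⊆ φ ⁻¹' U := fun z ⟨m, hm⟩ => hm (mem_iInter.1 (hφ z) m)
  refine ⟨V, hV, IsNowhereDense.isMeagre ?_⟩
  rw [symmDiff_of_ge hVU]
  refine isNowhereDense_of_forall_exists_disjoint fun O hO hne => ?_
  obtain ⟨C, hC, hCne, hCW⟩ := exists_forall_subset_exists_coord_eq hO hne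
  -- Either `C` meets `U`, and coordinate `m` can be made a subset of `U`, or `φ` avoids `U`.
  by_cases hCU : (C ∩ U).Nonempty
  · obtain ⟨O', hO'O, hO', hO'ne, m, hm⟩ := hCW _ (hC.inter hU) hCU inter_subset_left
    refine ⟨O', hO'O, hO', hO'ne, disjoint_left.2 fun z hz hzV => hzV.2 ⟨m, ?_⟩⟩
    exact (hm z hz).le.trans inter_subset_right
  · obtain ⟨O', hO'O, hO', hO'ne, m, hm⟩ := hCW C hC hCne subset_rfl
    refine ⟨O', hO'O, hO', hO'ne, disjoint_left.2 fun z hz hzV => hCU ⟨φ z, ?_, hzV.1⟩⟩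
    exact hm z hz ▸ mem_iInter.1 (hφ z) m

end SeqSpace

theorem stmt4 (X : Type) [TopologicalSpace X]
    (φ : SeqSpace X → X) (hφ : ∀ x : SeqSpace X, φ x ∈ ⋂ n, ((x.1 n).1 : Set X))
    (F : Set (Set X)) (hF : IsKurPartition X F) :
    TopologicalSpace.MetrizableSpace (SeqSpace X) ∧
      IsKurPartition (SeqSpace X) ((fun s => φ ⁻¹' s) '' F) := by
  exact ⟨inferInstance, hF.preimage (fun _ => SeqSpace.isNowhereDense_preimage hφ)
    (fun _ => SeqSpace.exists_isOpen_isMeagre_symmDiff_preimage hφ)⟩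
end

section
/- In the Ellentuck space, every meager set is nowhere dense; equivalently, the nowhere dense (Ramsey null) subsets of the Ellentuck space form a σ-ideal. -/
/-!
Combinatorial forcing. Fix a dense open set `U` and a basic set `[a, A]`. By a fusion argument
shrink `A` to `D` so that `D` decides every `a ∪ s` with `s ⊆ D` finite: either `[a ∪ s, D] ⊆ U` or
no infinite `B ⊆ D` has `[a ∪ s, B] ⊆ U`. Whenever `D` rejects `a ∪ s`, it rejects `a ∪ s ∪ {n}`
for all but finitely many `n`; so if `D` rejected `a`, a second fusion yields `E ⊆ D` such that `D`
rejects every `a ∪ s` with `s ⊆ E`; but `U` meets `[a, E]` in a basic set, which is accepted by a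
subset of `D`. So every `[a, A]` contains some `[a, B] ⊆ U` (Galvin). A third fusion handles
countably many dense open sets at once, so every basic set contains a basic set missing a given
meagre set: meagre sets are nowhere dense.
-/

open Set Topology

/-- The points of the Ellentuck space: infinite subsets of `ω`. -/
abbrev EllPt : Type := {A : Set ℕ // A.Infinite}

/-- The basic set `[a, A] = {B : a ⊑ B ⊆ a ∪ A}`, where `a ⊑ B` means `a` is an
initial segment of `B` (i.e. `a ⊆ B` and every element of `B \ a` exceeds every
element of `a`). -/
def EBasic (a : Finset ℕ) (A : EllPt) : Set EllPt :=
  {B | ↑a ⊆ B.1 ∧ B.1 ⊆ ↑a ∪ A.1 ∧ ∀ m ∈ a, ∀ n ∈ B.1, n ∉ a → m < n}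

instance (priority := high) EllentuckSpace : TopologicalSpace EllPt :=
  TopologicalSpace.generateFrom {s | ∃ a A, s = EBasic a A}

namespace Ellentuck

-- `EBasic b A` is `basic b A.1`; allowing any `A : Set ℕ` spares infinitude proofs when shrinking.
def basic (b : Finset ℕ) (A : Set ℕ) : Set EllPt :=
  {B | ↑b ⊆ B.1 ∧ B.1 ⊆ ↑b ∪ A ∧ ∀ m ∈ b, ∀ n ∈ B.1, n ∉ b → m < n}

def above (b : Finset ℕ) (A : Set ℕ) : Set ℕ := {n ∈ A | ∀ m ∈ b, m < n}

lemma basic_mono {b : Finset ℕ} {A A' : Set ℕ} (h : A ⊆ A') : basic b A ⊆ basic b A' :=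
  fun _ ⟨h1, h2, h3⟩ => ⟨h1, h2.trans (union_subset_union_right _ h), h3⟩

lemma above_subset (b : Finset ℕ) (A : Set ℕ) : above b A ⊆ A := fun _ h => h.1

lemma above_mono (b : Finset ℕ) {A A' : Set ℕ} (h : A ⊆ A') : above b A ⊆ above b A' :=
  fun _ hn => ⟨h hn.1, hn.2⟩

lemma infinite_above (b : Finset ℕ) {A : Set ℕ} (hA : A.Infinite) : (above b A).Infinite :=
  (hA.sdiff (finite_Iic (b.sup id))).mono fun n (hn : n ∈ A \ Iic _) =>
    ⟨hn.1, fun _ hm => (Finset.le_sup (f := id) hm).trans_lt (not_le.1 hn.2)⟩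

lemma basic_above (b : Finset ℕ) (A : Set ℕ) : basic b (above b A) = basic b A := by
  refine (basic_mono (above_subset b A)).antisymm ?_
  rintro X ⟨h1, h2, h3⟩
  refine ⟨h1, fun n hn => ?_, h3⟩
  by_cases hb : n ∈ b
  · exact Or.inl hb
  · exact Or.inr ⟨(h2 hn).resolve_left hb, fun m hm => h3 m hm n hn hb⟩

lemma above_union_of_subset {a s : Finset ℕ} {A D : Set ℕ} (hD : D ⊆ above a A) :
    above (a ∪ s) D = above s D := by
  ext n
  simp only [above, mem_ofPred_eq, Finset.mem_union, or_imp, forall_and]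
  exact ⟨fun h => ⟨h.1, h.2.2⟩, fun h => ⟨h.1, (hD h.1).2, h.2⟩⟩

lemma basic_nonempty (b : Finset ℕ) {A : Set ℕ} (hA : A.Infinite) : (basic b A).Nonempty :=
  ⟨⟨↑b ∪ above b A, (infinite_above b hA).mono subset_union_right⟩, subset_union_left,
    union_subset_union_right _ (above_subset b A),
    fun m hm _ hn hnb => (hn.resolve_left hnb).2 m hm⟩

lemma basic_isOpen (b : Finset ℕ) {A : Set ℕ} (hA : A.Infinite) : IsOpen (basic b A) :=
  TopologicalSpace.isOpen_generateFrom_of_mem ⟨b, ⟨A, hA⟩, rfl⟩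

lemma basic_diff_subset {X : EllPt} {c d : Finset ℕ} {C : Set ℕ} (hX : X ∈ basic c C)
    (hd : ↑d ⊆ X.1) (hcd : c ⊆ d) : basic d (X.1 \ d) ⊆ basic c C := by
  rintro Y ⟨hY1, hY2, -⟩
  have hYX : Y.1 ⊆ X.1 := hY2.trans (union_subset hd sdiff_subset)
  exact ⟨(Finset.coe_subset.2 hcd).trans hY1, hYX.trans hX.2.1,
    fun m hm n hn hnc => hX.2.2 m hm n (hYX hn) hnc⟩

lemma mem_basic_union_diff {X : EllPt} {a b : Finset ℕ} {A B : Set ℕ} (ha : X ∈ basic a A)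
    (hb : X ∈ basic b B) : X ∈ basic (a ∪ b) (X.1 \ ↑(a ∪ b)) := by
  refine ⟨by rw [Finset.coe_union]; exact union_subset ha.1 hb.1,
    by rw [union_sdiff_self]; exact subset_union_right, fun m hm n hn hnab => ?_⟩
  rcases Finset.mem_union.1 hm with hm | hm
  · exact ha.2.2 m hm n hn fun h => hnab (Finset.mem_union_left _ h)
  · exact hb.2.2 m hm n hn fun h => hnab (Finset.mem_union_right _ h)

lemma isTopologicalBasis_basic :
    TopologicalSpace.IsTopologicalBasis {s : Set EllPt | ∃ a A, s = EBasic a A} := by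
  refine ⟨?_, sUnion_eq_univ_iff.2 fun X => ⟨EBasic ∅ X, ⟨∅, X, rfl⟩, by simp [EBasic]⟩, rfl⟩
  rintro _ ⟨a, A, rfl⟩ _ ⟨b, B, rfl⟩ X ⟨hXa, hXb⟩
  have hab : ↑(a ∪ b) ⊆ X.1 := (mem_basic_union_diff hXa hXb).1
  exact ⟨basic (a ∪ b) (X.1 \ ↑(a ∪ b)), ⟨a ∪ b, ⟨_, X.2.sdiff (Finset.finite_toSet _)⟩, rfl⟩,
    mem_basic_union_diff hXa hXb, subset_inter (basic_diff_subset hXa hab Finset.subset_union_left)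
      (basic_diff_subset hXb hab Finset.subset_union_right)⟩

section Fusion

variable {P : Finset ℕ → Set ℕ → Prop}

lemma exists_forall_mem_finset (hP : ∀ s, Antitone (P s))
    (hex : ∀ s {A : Set ℕ}, A.Infinite → ∃ B ⊆ A, B.Infinite ∧ P s B)
    (S : Finset (Finset ℕ)) {A : Set ℕ} (hA : A.Infinite) :
    ∃ B ⊆ A, B.Infinite ∧ ∀ s ∈ S, P s B := by
  classical
  induction S using Finset.induction_on with
  | empty => exact ⟨A, subset_rfl, hA, by simp⟩
  | insert s S _ ih =>
    obtain ⟨B, hBA, hB, hBS⟩ := ih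
    obtain ⟨C, hCB, hC, hCs⟩ := hex s hB
    exact ⟨C, hCB.trans hBA, hC, Finset.forall_mem_insert _ _ _ |>.2
      ⟨hCs, fun t ht => hP t hCB (hBS t ht)⟩⟩

theorem exists_fusion (hP : ∀ s, Antitone (P s))
    (hex : ∀ s {A : Set ℕ}, A.Infinite → ∃ B ⊆ A, B.Infinite ∧ P s B)
    {A : Set ℕ} (hA : A.Infinite) :
    ∃ D ⊆ A, D.Infinite ∧ ∀ s : Finset ℕ, ↑s ⊆ D → P s (above s D) := by
  choose! next hnext_sub hnext_inf hnext using fun N (A : Set ℕ) (hA : A.Infinite) =>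
    exists_forall_mem_finset hP hex (Finset.range N).powerset hA
  -- `C (k + 1)` shrinks `C k` above its least element `m k` and handles every `s ⊆ [0, m k]`.
  let C : ℕ → Set ℕ := fun k =>
    Nat.rec (next 0 A) (fun _ c => next (sInf c + 1) (above {sInf c} c)) k
  let m : ℕ → ℕ := fun k => sInf (C k)
  have hC_succ (k : ℕ) : C (k + 1) = next (m k + 1) (above {m k} (C k)) := rfl
  have hC_inf (k : ℕ) : (C k).Infinite := by
    induction k with
    | zero => exact hnext_inf 0 A hA
    | succ k ih => rw [hC_succ]; exact hnext_inf _ _ (infinite_above _ ih)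
  have hm_mem (k : ℕ) : m k ∈ C k := Nat.sInf_mem (hC_inf k).nonempty
  have hC_succ_sub (k : ℕ) : C (k + 1) ⊆ above {m k} (C k) := by
    rw [hC_succ]; exact hnext_sub _ _ (infinite_above _ (hC_inf k))
  have hC_anti : Antitone C :=
    antitone_nat_of_succ_le fun k => (hC_succ_sub k).trans (above_subset _ _)
  have hm : StrictMono m := strictMono_nat_of_lt_succ fun k =>
    (hC_succ_sub k (hm_mem (k + 1))).2 _ (Finset.mem_singleton_self _)
  have hm_C0 : range m ⊆ C 0 := range_subset_iff.2 fun k => hC_anti (Nat.zero_le k) (hm_mem k)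
  refine ⟨range m, hm_C0.trans (hnext_sub 0 A hA), infinite_range_of_injective hm.injective,
    fun s hs => ?_⟩
  rcases s.eq_empty_or_nonempty with rfl | hne
  · exact hP ∅ ((above_subset _ _).trans hm_C0) (hnext 0 A hA ∅ (by simp))
  · obtain ⟨k, hk⟩ := hs (s.max'_mem hne)
    have hP_succ : P s (C (k + 1)) := by
      rw [hC_succ]
      refine hnext _ _ (infinite_above _ (hC_inf k)) s (Finset.mem_powerset.2 fun x hx => ?_)
      exact Finset.mem_range.2 (Nat.lt_succ_of_le (hk ▸ s.le_max' x hx))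
    refine hP s ?_ hP_succ
    rintro _ ⟨⟨j, rfl⟩, hj⟩
    exact hC_anti (hm.lt_iff_lt.1 (hk ▸ hj _ (s.max'_mem hne))) (hm_mem j)

end Fusion

section Forcing

variable (U : Set EllPt)

def Accepts (A : Set ℕ) (b : Finset ℕ) : Prop := basic b A ⊆ U

def Rejects (A : Set ℕ) (b : Finset ℕ) : Prop := ∀ B ⊆ A, B.Infinite → ¬Accepts U B b

def Decides (A : Set ℕ) (b : Finset ℕ) : Prop := Accepts U A b ∨ Rejects U A b

variable {U}

lemma Decides.mono {A B : Set ℕ} {b : Finset ℕ} (h : B ⊆ A) (hA : Decides U A b) :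
    Decides U B b :=
  hA.imp (basic_mono h).trans fun hA C hC => hA C (hC.trans h)

lemma exists_decides (b : Finset ℕ) {A : Set ℕ} (hA : A.Infinite) :
    ∃ B ⊆ A, B.Infinite ∧ Decides U B b := by
  by_cases h : Rejects U A b
  · exact ⟨A, subset_rfl, hA, Or.inr h⟩
  · simp only [Rejects, not_forall, not_not] at h
    obtain ⟨B, hBA, hB, hacc⟩ := h
    exact ⟨B, hBA, hB, Or.inl hacc⟩

lemma Decides.of_above {A : Set ℕ} {b : Finset ℕ} (h : Decides U (above b A) b) :
    Decides U A b := by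
  refine h.imp (fun h => ?_) fun h B hBA hB hacc => ?_
  · rwa [Accepts, basic_above] at h
  · exact h _ (above_mono b hBA) (infinite_above b hB) (by rwa [Accepts, basic_above])

lemma exists_decides_union (a : Finset ℕ) {A : Set ℕ} (hA : A.Infinite) :
    ∃ D ⊆ above a A, D.Infinite ∧ ∀ s : Finset ℕ, ↑s ⊆ D → Decides U D (a ∪ s) := by
  obtain ⟨D, hDA, hD, hDdec⟩ := exists_fusion (P := fun s B => Decides U B (a ∪ s))
    (fun _ _ _ h => Decides.mono h) (fun s _ hA => exists_decides (a ∪ s) hA)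
    (infinite_above a hA)
  refine ⟨D, hDA, hD, fun s hs => Decides.of_above ?_⟩
  rw [above_union_of_subset hDA]
  exact hDdec s hs

lemma finite_setOf_accepts_insert {D : Set ℕ} {b : Finset ℕ} (h : Rejects U D b) :
    {n ∈ above b D | Accepts U D (insert n b)}.Finite := by
  by_contra hinf
  refine h _ (fun n hn => hn.1.1) hinf ?_
  rintro X ⟨hX1, hX2, hX3⟩
  -- `X` lies in `[insert n b, D]` for the least element `n` of `X \ b`
  have hne : (X.1 \ ↑b).Nonempty := (X.2.sdiff b.finite_toSet).nonempty
  set n := sInf (X.1 \ ↑b)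
  have hnX : n ∈ X.1 \ ↑b := Nat.sInf_mem hne
  have hn : n ∈ {n ∈ above b D | Accepts U D (insert n b)} := (hX2 hnX.1).resolve_left hnX.2
  refine hn.2 ⟨?_, fun y hy => ?_, fun k hk y hy hyn => ?_⟩
  · rw [Finset.coe_insert]
    exact insert_subset hnX.1 hX1
  · rw [Finset.coe_insert]
    exact (hX2 hy).imp (fun h => mem_insert_of_mem _ h) fun h => h.1.1
  · have hyb : y ∉ b := fun h => hyn (Finset.mem_insert_of_mem h)
    rcases Finset.mem_insert.1 hk with rfl | hk
    · exact (Nat.sInf_le (show y ∈ X.1 \ ↑b from ⟨hy, hyb⟩)).lt_of_ne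
        fun h => hyn (h ▸ Finset.mem_insert_self _ b)
    · exact hX3 k hk y hy hyb

lemma exists_rejects_union {a : Finset ℕ} {D : Set ℕ} (hD : D.Infinite)
    (hDdec : ∀ s : Finset ℕ, ↑s ⊆ D → Decides U D (a ∪ s)) (hrej : Rejects U D a) :
    ∃ E ⊆ D, E.Infinite ∧ ∀ s : Finset ℕ, ↑s ⊆ E → Rejects U D (a ∪ s) := by
  let bad : Finset ℕ → Set ℕ := fun s => {n ∈ above (a ∪ s) D | Accepts U D (insert n (a ∪ s))}
  obtain ⟨E, hEa, hE, hEbad⟩ :=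
    exists_fusion (P := fun s B => Rejects U D (a ∪ s) → Disjoint B (bad s))
      (fun _ _ _ h hP hrej => (hP hrej).mono_left h)
      (fun s A hA => by
        by_cases hrej : Rejects U D (a ∪ s)
        · exact ⟨A \ bad s, sdiff_subset, hA.sdiff (finite_setOf_accepts_insert hrej),
            fun _ => disjoint_sdiff_left⟩
        · exact ⟨A, subset_rfl, hA, fun h => absurd h hrej⟩)
      (infinite_above a hD)
  have hED : E ⊆ D := hEa.trans (above_subset a D)
  refine ⟨E, hED, hE, fun s => ?_⟩
  induction s using Finset.induction_on_max with
  | empty => simpa using hrej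
  | insert x s hxs ih =>
    intro hs
    rw [Finset.coe_insert, insert_subset_iff] at hs
    have hrej_s := ih hs.2
    have hx_good : x ∉ bad s := (hEbad s hs.2 hrej_s).notMem_of_mem_left ⟨hs.1, hxs⟩
    have hx_above : x ∈ above (a ∪ s) D := ⟨hED hs.1, fun m hm =>
      (Finset.mem_union.1 hm).elim (fun hm => (hEa hs.1).2 m hm) (hxs m)⟩
    have hdec := hDdec (insert x s) <| by
      rw [Finset.coe_insert]
      exact insert_subset (hED hs.1) (hs.2.trans hED)
    rw [Finset.union_insert] at hdec ⊢
    exact hdec.resolve_left fun hacc => hx_good ⟨hx_above, hacc⟩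

end Forcing

theorem exists_basic_subset_of_dense {U : Set EllPt} (hUo : IsOpen U) (hUd : Dense U)
    (b : Finset ℕ) {A : Set ℕ} (hA : A.Infinite) : ∃ B ⊆ A, B.Infinite ∧ basic b B ⊆ U := by
  obtain ⟨D, hDA, hD, hDdec⟩ := exists_decides_union (U := U) b hA
  have hdec : Decides U D b := by simpa using hDdec ∅ (by simp)
  refine hdec.elim (fun hacc => ⟨D, hDA.trans (above_subset b A), hD, hacc⟩) fun hrej => ?_
  exfalso
  obtain ⟨E, hED, hE, hErej⟩ := exists_rejects_union hD hDdec hrej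
  obtain ⟨X, hXE, hXU⟩ := hUd.inter_open_nonempty _ (basic_isOpen b hE) (basic_nonempty b hE)
  obtain ⟨_, ⟨c, C, rfl⟩, hXc, hcU⟩ :=
    isTopologicalBasis_basic.exists_subset_of_mem_open hXU hUo
  have hbc : ↑(b ∪ c) ⊆ X.1 := (mem_basic_union_diff hXE hXc).1
  have hXE' : X.1 \ ↑b ⊆ E := fun x hx => (hXE.2.1 hx.1).resolve_left hx.2
  have hcb : ↑(c \ b) ⊆ E := fun x hx => by
    rw [Finset.coe_sdiff] at hx
    exact hXE' ⟨hXc.1 hx.1, hx.2⟩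
  refine hErej (c \ b) hcb (X.1 \ ↑(b ∪ c)) ?_ (X.2.sdiff (Finset.finite_toSet _)) ?_
  · exact fun x hx => hED (hXE' ⟨hx.1, fun h => hx.2 (Finset.mem_union_left c h)⟩)
  · rw [Accepts, Finset.union_sdiff_self_eq_union]
    exact (basic_diff_subset hXc hbc Finset.subset_union_right).trans hcU

lemma mem_basic_union_initial {X : EllPt} {a : Finset ℕ} {D : Set ℕ} (hX : X ∈ basic a D)
    {s : Finset ℕ} {N : ℕ} (hs : ↑s = X.1 \ ↑a ∩ Iic N) : X ∈ basic (a ∪ s) (above s D) := by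
  have hs_le : ∀ m ∈ s, m ≤ N := fun m hm => ((Set.ext_iff.1 hs m).1 hm).2
  have hlt : ∀ y ∈ X.1, y ∉ a → y ∉ s → N < y := fun y hy hya hys =>
    not_le.1 fun hyN => hys ((Set.ext_iff.1 hs y).2 ⟨⟨hy, hya⟩, hyN⟩)
  refine ⟨?_, fun y hy => ?_, fun m hm y hy hyas => ?_⟩
  · rw [Finset.coe_union, hs]
    exact union_subset hX.1 fun x hx => hx.1.1
  · by_cases hyas : y ∈ a ∪ s
    · exact Or.inl hyas
    · rw [Finset.mem_union, not_or] at hyas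
      exact Or.inr ⟨(hX.2.1 hy).resolve_left hyas.1,
        fun m hm => (hs_le m hm).trans_lt (hlt y hy hyas.1 hyas.2)⟩
  · rw [Finset.mem_union, not_or] at hyas
    rcases Finset.mem_union.1 hm with hm | hm
    · exact hX.2.2 m hm y hy hyas.1
    · exact (hs_le m hm).trans_lt (hlt y hy hyas.1 hyas.2)

theorem exists_basic_subset_iInter {U : ℕ → Set EllPt} (hUo : ∀ n, IsOpen (U n))
    (hUd : ∀ n, Dense (U n)) (a : Finset ℕ) {A : Set ℕ} (hA : A.Infinite) :
    ∃ B ⊆ A, B.Infinite ∧ basic a B ⊆ ⋂ n, U n := by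
  let V : ℕ → Set EllPt := fun n => ⋂₀ (U '' Iic n)
  have hVo (n : ℕ) : IsOpen (V n) :=
    ((finite_Iic n).image U).isOpen_sInter (forall_mem_image.2 fun i _ => hUo i)
  have hVd (n : ℕ) : Dense (V n) :=
    ((finite_Iic n).image U).dense_sInter (forall_mem_image.2 fun i _ => hUo i)
      (forall_mem_image.2 fun i _ => hUd i)
  obtain ⟨D, hDA, hD, hDV⟩ :=
    exists_fusion (P := fun s B => basic (a ∪ s) B ⊆ V (s.sup id))
      (fun _ _ _ h hB => (basic_mono h).trans hB)
      (fun s _ hA => exists_basic_subset_of_dense (hVo _) (hVd _) (a ∪ s) hA)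
      (infinite_above a hA)
  refine ⟨D, hDA.trans (above_subset a A), hD, fun X hX => mem_iInter.2 fun n => ?_⟩
  -- cut `X` at an element `N ≥ n` of `X \ a`; the finite part below `N` lies in `D`
  obtain ⟨N, hNX, hnN⟩ := (X.2.sdiff a.finite_toSet).exists_gt n
  obtain ⟨s, hs⟩ : ∃ s : Finset ℕ, ↑s = X.1 \ ↑a ∩ Iic N :=
    ⟨_, ((finite_Iic N).inter_of_right _).coe_toFinset⟩
  have hsD : ↑s ⊆ D := hs ▸ fun x hx => (hX.2.1 hx.1.1).resolve_left hx.1.2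
  have hNs : N ∈ s := by rw [← Finset.mem_coe, hs]; exact ⟨hNX, mem_Iic.2 le_rfl⟩
  refine sInter_subset_of_mem (mem_image_of_mem U ?_) (hDV s hsD (mem_basic_union_initial hX hs))
  exact hnN.le.trans (Finset.le_sup (f := id) hNs)

theorem isNowhereDense_of_isMeagre {s : Set EllPt} (hs : IsMeagre s) : IsNowhereDense s := by
  obtain ⟨S, hSo, hSd, hS, hSs⟩ := mem_residual_iff.1 hs
  obtain ⟨U, hU⟩ := (hS.insert univ).exists_eq_range (insert_nonempty _ _)
  have hU_mem (n : ℕ) : U n ∈ insert univ S := hU ▸ mem_range_self n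
  have hU_sub : ⋂ n, U n ⊆ sᶜ := by rwa [← sInter_range, ← hU, sInter_insert, univ_inter]
  rw [IsNowhereDense, eq_empty_iff_forall_notMem]
  intro X hX
  obtain ⟨_, ⟨a, A, rfl⟩, -, haA⟩ :=
    isTopologicalBasis_basic.exists_subset_of_mem_open hX isOpen_interior
  obtain ⟨B, hBA, hB, hBU⟩ := exists_basic_subset_iInter
    (fun n => (hU_mem n).elim (fun h => h ▸ isOpen_univ) (hSo _))
    (fun n => (hU_mem n).elim (fun h => h ▸ dense_univ) (hSd _)) a A.2
  obtain ⟨Y, hY⟩ := basic_nonempty a hB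
  obtain ⟨Z, hZB, hZs⟩ := mem_closure_iff.1 (interior_subset (haA (basic_mono hBA hY)))
    _ (basic_isOpen a hB) hY
  exact hU_sub (hBU hZB) hZs

end Ellentuck

/-- In the Ellentuck space every meager set is nowhere dense; equivalently, the
nowhere dense (Ramsey null) sets form a σ-ideal: they are closed under subsets
and countable unions. -/
theorem stmt13 :
    (∀ s : Set EllPt, IsMeagre s → IsNowhereDense s) ∧
      (∀ s t : Set EllPt, t ⊆ s → IsNowhereDense s → IsNowhereDense t) ∧
      ∀ f : ℕ → Set EllPt, (∀ n, IsNowhereDense (f n)) → IsNowhereDense (⋃ n, f n) :=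
  ⟨fun _ => Ellentuck.isNowhereDense_of_isMeagre, fun _ _ hts hs => hs.mono hts,
    fun _ hf => Ellentuck.isNowhereDense_of_isMeagre (isMeagre_iUnion fun n => (hf n).isMeagre)⟩
end

section
/- Oxtoby's theorem: a nonempty topological space X is a Baire space if and only if player I has no winning strategy in the Choquet game on X. -/
open Set Topology

/-- The history of player II's moves `V 0, …, V (n-1)`. -/
def hist {X : Type} (V : ℕ → Set X) (n : ℕ) : List (Set X) :=
  List.ofFn fun i : Fin n => V i

/-- Player II has played legally (nonempty open sets refining I's moves, which are
produced by the strategy `σ` from the history of II's moves) for the first `n`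
rounds. -/
def LegalSoFar {X : Type} [TopologicalSpace X]
    (σ : List (Set X) → Set X) (V : ℕ → Set X) (n : ℕ) : Prop :=
  ∀ m < n, IsOpen (V m) ∧ (V m).Nonempty ∧ V m ⊆ σ (hist V m)

/-- `σ` is a winning strategy for player I in the Choquet game: it always answers
legal play by II with a legal move (a nonempty open set contained in II's last
move), and in every run in which II plays legally the intersection of the moves
is empty. -/
def WinningStratI (X : Type) [TopologicalSpace X] (σ : List (Set X) → Set X) : Prop :=
  (∀ (V : ℕ → Set X) (n : ℕ), LegalSoFar σ V n →
      IsOpen (σ (hist V n)) ∧ (σ (hist V n)).Nonempty ∧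
        ∀ m, n = m + 1 → σ (hist V n) ⊆ V m) ∧
    ∀ V : ℕ → Set X, (∀ n, LegalSoFar σ V n → IsOpen (V n) ∧ (V n).Nonempty ∧
        V n ⊆ σ (hist V n)) →
      (⋂ n, σ (hist V n)) = ∅


/-!
If `X` is not Baire, some nonempty open `U` misses `⋂ n, f n` for dense open sets `f n`; player I
opens with `U ∩ f 0` and answers the `n`-th move `V` of II by `V ∩ f (n + 1)`, which confines every
run to `U ∩ ⋂ n, f n = ∅`.

Conversely, let `σ` be a strategy for I in a Baire space. At each position `p` choose, by Zorn's
lemma, a maximal family of moves of II whose answers by `σ` are pairwise disjoint; by maximality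
these answers are dense in `σ p`. Iterating gives a tree of positions whose `n`-th level has
pairwise disjoint answers, with union `W n` open and dense in the first move `σ []`. By the Baire
property some `x ∈ σ []` lies in every `W n`, and the branch of the tree through `x`, unique by
disjointness, is a run of II against `σ` whose intersection contains `x`.
-/

section Histories

variable {X : Type}

lemma hist_length (V : ℕ → Set X) (n : ℕ) : (hist V n).length = n := by
  simp [hist]

lemma getElem_hist (V : ℕ → Set X) {n m : ℕ} (h : m < (hist V n).length) :
    (hist V n)[m] = V m := by
  simp [hist]

lemma take_hist (V : ℕ → Set X) {n m : ℕ} (h : m ≤ n) : (hist V n).take m = hist V m :=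
  List.ext_getElem (by simp [hist_length, h]) fun i _ _ => by simp [getElem_hist]

lemma hist_succ (V : ℕ → Set X) (n : ℕ) : hist V (n + 1) = hist V n ++ [V n] := by
  rw [hist, List.ofFn_succ', List.concat_eq_append]
  rfl

lemma hist_getD (p : List (Set X)) : hist (p.getD · ∅) p.length = p :=
  List.ext_getElem (hist_length _ _) fun i _ h => by
    rw [getElem_hist, List.getD_eq_getElem _ _ h]

lemma exists_hist_forall_of_step (P : ℕ → List (Set X) → Prop)
    (R : List (Set X) → Set X → Prop)
    (h₀ : P 0 []) (step : ∀ n p, P n p → ∃ a, R p a ∧ P (n + 1) (p ++ [a])) :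
    ∃ V : ℕ → Set X, ∀ n, P n (hist V n) ∧ R (hist V n) (V n) := by
  choose! g hgR hgP using step
  let B : ℕ → List (Set X) := fun n => Nat.rec [] (fun n b => b ++ [g n b]) n
  have hB : ∀ n, P n (B n) := fun n => by
    induction n with
    | zero => exact h₀
    | succ n ih => exact hgP n _ ih
  have hist_eq : ∀ n, hist (fun n => g n (B n)) n = B n := fun n => by
    induction n with
    | zero => rfl
    | succ n ih => rw [hist_succ, ih]
  exact ⟨fun n => g n (B n), fun n => by rw [hist_eq]; exact ⟨hB n, hgR n _ (hB n)⟩⟩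

end Histories

section Legality

variable {X : Type} [TopologicalSpace X] {σ : List (Set X) → Set X}

def ChoquetMoves (σ : List (Set X) → Set X) (p : List (Set X)) : Set (Set X) :=
  {V | IsOpen V ∧ V.Nonempty ∧ V ⊆ σ p}

def IsLegalPosition (σ : List (Set X) → Set X) (p : List (Set X)) : Prop :=
  ∀ m (hm : m < p.length), p[m] ∈ ChoquetMoves σ (p.take m)

lemma legalSoFar_iff {V : ℕ → Set X} {n : ℕ} :
    LegalSoFar σ V n ↔ IsLegalPosition σ (hist V n) := by
  simp only [IsLegalPosition, hist_length, getElem_hist]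
  refine forall_congr' fun m => forall_congr' fun hm => ?_
  rw [take_hist V hm.le]
  rfl

lemma isLegalPosition_nil : IsLegalPosition σ [] :=
  fun _ hm => absurd hm (Nat.not_lt_zero _)

lemma IsLegalPosition.append {p : List (Set X)} {a : Set X} (hp : IsLegalPosition σ p)
    (ha : a ∈ ChoquetMoves σ p) : IsLegalPosition σ (p ++ [a]) := by
  intro m hm
  rcases (Nat.lt_succ_iff_lt_or_eq.mp (by simpa using hm)) with hm | rfl
  · simpa [List.getElem_append_left hm, List.take_append_of_le_length hm.le] using hp m hm
  · simpa using ha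

/-- The first half of `WinningStratI`. -/
def AnswersLegally (σ : List (Set X) → Set X) : Prop :=
  ∀ (V : ℕ → Set X) (n : ℕ), LegalSoFar σ V n →
    IsOpen (σ (hist V n)) ∧ (σ (hist V n)).Nonempty ∧
      ∀ m, n = m + 1 → σ (hist V n) ⊆ V m

namespace AnswersLegally

lemma of_isLegalPosition (hσ : AnswersLegally σ) {p : List (Set X)}
    (hp : IsLegalPosition σ p) :
    IsOpen (σ p) ∧ (σ p).Nonempty ∧ ∀ q a, p = q ++ [a] → σ p ⊆ a := by
  obtain ⟨hopen, hne, hsub⟩ :=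
    hσ (p.getD · ∅) p.length (legalSoFar_iff.2 (by rwa [hist_getD]))
  rw [hist_getD] at hopen hne hsub
  refine ⟨hopen, hne, fun q a hpq => ?_⟩
  subst hpq
  simpa [List.getD_append_right] using hsub q.length (by simp)

lemma isOpen (hσ : AnswersLegally σ) {p : List (Set X)} (hp : IsLegalPosition σ p) :
    IsOpen (σ p) :=
  (hσ.of_isLegalPosition hp).1

lemma nonempty (hσ : AnswersLegally σ) {p : List (Set X)} (hp : IsLegalPosition σ p) :
    (σ p).Nonempty :=
  (hσ.of_isLegalPosition hp).2.1

lemma subset_last (hσ : AnswersLegally σ) {p : List (Set X)} {a : Set X}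
    (hp : IsLegalPosition σ (p ++ [a])) : σ (p ++ [a]) ⊆ a :=
  (hσ.of_isLegalPosition hp).2.2 p a rfl

lemma subset_of_mem_choquetMoves (hσ : AnswersLegally σ) {p : List (Set X)} {a : Set X}
    (hp : IsLegalPosition σ p) (ha : a ∈ ChoquetMoves σ p) : σ (p ++ [a]) ⊆ σ p :=
  (hσ.subset_last (hp.append ha)).trans ha.2.2

end AnswersLegally

end Legality

section DisjointFamilies

variable {X : Type} [TopologicalSpace X]

lemma exists_pairwiseDisjoint_subset_closure_biUnion {U : Set X} (hU : IsOpen U)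
    (r : Set X → Set X)
    (hr : ∀ V, IsOpen V → V.Nonempty → V ⊆ U → (r V).Nonempty ∧ r V ⊆ V) :
    ∃ S ⊆ {V | IsOpen V ∧ V.Nonempty ∧ V ⊆ U}, S.PairwiseDisjoint r ∧
      U ⊆ closure (⋃ V ∈ S, r V) := by
  obtain ⟨S, hS⟩ : ∃ S, Maximal (fun S => S ⊆ {V | IsOpen V ∧ V.Nonempty ∧ V ⊆ U} ∧
      S.PairwiseDisjoint r) S :=
    zorn_subset _ fun c hc hchain => ⟨⋃₀ c, ⟨sUnion_subset fun s hs => (hc hs).1,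
      (hchain.pairwiseDisjoint_sUnion r).2 fun s hs => (hc hs).2⟩,
      fun _ => subset_sUnion_of_mem⟩
  refine ⟨S, hS.1.1, hS.1.2, fun x hx => mem_closure_iff.2 fun O hO hxO => ?_⟩
  have hV : O ∩ U ∈ {V | IsOpen V ∧ V.Nonempty ∧ V ⊆ U} :=
    ⟨hO.inter hU, ⟨x, hxO, hx⟩, inter_subset_right⟩
  obtain ⟨hrne, hrV⟩ := hr _ hV.1 hV.2.1 hV.2.2
  by_contra hmiss
  have hdisj : ∀ W ∈ S, Disjoint (r (O ∩ U)) (r W) := fun W hW =>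
    disjoint_left.2 fun y hyV hyW => hmiss ⟨y, (hrV hyV).1, mem_biUnion hW hyW⟩
  have hmem : O ∩ U ∈ S :=
    hS.mem_of_prop_insert ⟨insert_subset hV hS.1.1, hS.1.2.insert fun W hW _ => hdisj W hW⟩
  exact hmiss (hrne.mono fun y hy => ⟨(hrV hy).1, mem_biUnion hmem hy⟩)

lemma nonempty_inter_iInter_of_subset_closure [BaireSpace X] {U : Set X} (hUo : IsOpen U)
    (hUne : U.Nonempty) {W : ℕ → Set X} (hWo : ∀ n, IsOpen (W n))
    (hUW : ∀ n, U ⊆ closure (W n)) : (U ∩ ⋂ n, W n).Nonempty := by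
  have hdense : Dense (⋂ n, W n ∪ (closure U)ᶜ) := by
    refine dense_iInter_of_isOpen_nat (fun n => (hWo n).union isClosed_closure.isOpen_compl)
      fun n => ?_
    rw [dense_iff_closure_eq, closure_union, eq_univ_iff_forall]
    intro x
    by_cases hx : x ∈ closure U
    · exact Or.inl (closure_minimal (hUW n) isClosed_closure hx)
    · exact Or.inr (subset_closure hx)
  obtain ⟨x, hxU, hx⟩ := hdense.inter_open_nonempty U hUo hUne
  exact ⟨x, hxU, mem_iInter.2 fun n =>
    (mem_iInter.1 hx n).resolve_right (not_not.2 (subset_closure hxU))⟩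

end DisjointFamilies

section ReplyTree

variable {X : Type} [TopologicalSpace X] {σ : List (Set X) → Set X}

structure IsDisjointDenseReplies (σ : List (Set X) → Set X) (S : List (Set X) → Set (Set X)) :
    Prop where
  subset_choquetMoves : ∀ p, S p ⊆ ChoquetMoves σ p
  pairwiseDisjoint : ∀ p, (S p).PairwiseDisjoint fun a => σ (p ++ [a])
  subset_closure : ∀ p, IsLegalPosition σ p → σ p ⊆ closure (⋃ a ∈ S p, σ (p ++ [a]))

lemma AnswersLegally.exists_isDisjointDenseReplies (hσ : AnswersLegally σ) :
    ∃ S, IsDisjointDenseReplies σ S := by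
  have : ∀ p, ∃ S ⊆ ChoquetMoves σ p, (S.PairwiseDisjoint fun a => σ (p ++ [a])) ∧
      (IsLegalPosition σ p → σ p ⊆ closure (⋃ a ∈ S, σ (p ++ [a]))) := by
    intro p
    by_cases hp : IsLegalPosition σ p
    · obtain ⟨S, hSM, hSd, hSc⟩ :=
        exists_pairwiseDisjoint_subset_closure_biUnion (hσ.isOpen hp) (fun a => σ (p ++ [a]))
          fun V hVo hVne hVU =>
            have hpV := hp.append ⟨hVo, hVne, hVU⟩
            ⟨hσ.nonempty hpV, hσ.subset_last hpV⟩
      exact ⟨S, hSM, hSd, fun _ => hSc⟩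
    · exact ⟨∅, empty_subset _, pairwiseDisjoint_empty, fun h => absurd h hp⟩
  choose S hSM hSd hSc using this
  exact ⟨S, ⟨hSM, hSd, hSc⟩⟩

def treeLevel (S : List (Set X) → Set (Set X)) : ℕ → Set (List (Set X))
  | 0 => {[]}
  | n + 1 => {q | ∃ p ∈ treeLevel S n, ∃ a ∈ S p, q = p ++ [a]}

namespace IsDisjointDenseReplies

variable {S : List (Set X) → Set (Set X)}

lemma isLegalPosition_of_mem_treeLevel (hS : IsDisjointDenseReplies σ S) {n : ℕ}
    {p : List (Set X)} (hp : p ∈ treeLevel S n) : IsLegalPosition σ p := by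
  induction n generalizing p with
  | zero => rw [show p = [] from hp]; exact isLegalPosition_nil
  | succ n ih =>
    obtain ⟨q, hq, a, ha, rfl⟩ := hp
    exact (ih hq).append (hS.subset_choquetMoves q ha)

lemma pairwiseDisjoint_treeLevel (hσ : AnswersLegally σ) (hS : IsDisjointDenseReplies σ S)
    (n : ℕ) : (treeLevel S n).PairwiseDisjoint σ := by
  induction n with
  | zero => exact pairwiseDisjoint_singleton _ _
  | succ n ih =>
    rintro _ ⟨p, hp, a, ha, rfl⟩ _ ⟨q, hq, b, hb, rfl⟩ hne
    by_cases hpq : p = q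
    · subst hpq
      exact hS.pairwiseDisjoint p ha hb fun hab => hne (by rw [hab])
    · have hsub : ∀ {r c}, r ∈ treeLevel S n → c ∈ S r → σ (r ++ [c]) ⊆ σ r :=
        fun hr hc =>
        hσ.subset_of_mem_choquetMoves (hS.isLegalPosition_of_mem_treeLevel hr)
          (hS.subset_choquetMoves _ hc)
      exact (ih hp hq hpq).mono (hsub hp ha) (hsub hq hb)

lemma subset_closure_treeLevel (hS : IsDisjointDenseReplies σ S) (n : ℕ) :
    σ [] ⊆ closure (⋃ p ∈ treeLevel S n, σ p) := by
  induction n with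
  | zero => exact _root_.subset_closure.trans' (by simp [treeLevel])
  | succ n ih =>
    refine ih.trans (closure_minimal (iUnion₂_subset fun p hp => ?_) isClosed_closure)
    refine (hS.subset_closure p (hS.isLegalPosition_of_mem_treeLevel hp)).trans
      (closure_mono (iUnion₂_subset fun a ha => ?_))
    exact subset_biUnion_of_mem (u := σ) ⟨p, hp, a, ha, rfl⟩

lemma exists_mem_treeLevel_succ (hσ : AnswersLegally σ) (hS : IsDisjointDenseReplies σ S)
    {n : ℕ} {p : List (Set X)} {x : X} (hp : p ∈ treeLevel S n) (hxp : x ∈ σ p)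
    (hx : x ∈ ⋃ q ∈ treeLevel S (n + 1), σ q) :
    ∃ a ∈ S p, p ++ [a] ∈ treeLevel S (n + 1) ∧ x ∈ σ (p ++ [a]) := by
  obtain ⟨_, ⟨q, hq, a, ha, rfl⟩, hxq⟩ := mem_iUnion₂.1 hx
  have hxq' : x ∈ σ q := hσ.subset_of_mem_choquetMoves (hS.isLegalPosition_of_mem_treeLevel hq)
    (hS.subset_choquetMoves q ha) hxq
  obtain rfl : q = p := by
    by_contra hqp
    exact disjoint_left.1 (hS.pairwiseDisjoint_treeLevel hσ n hq hp hqp) hxq' hxp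
  exact ⟨a, ha, ⟨q, hq, a, ha, rfl⟩, hxq⟩

end IsDisjointDenseReplies

theorem AnswersLegally.exists_run_nonempty_iInter [BaireSpace X] (hσ : AnswersLegally σ) :
    ∃ V : ℕ → Set X,
      (∀ n, V n ∈ ChoquetMoves σ (hist V n)) ∧ (⋂ n, σ (hist V n)).Nonempty := by
  obtain ⟨S, hS⟩ := hσ.exists_isDisjointDenseReplies
  obtain ⟨x, hx₀, hx⟩ := nonempty_inter_iInter_of_subset_closure
    (hσ.isOpen isLegalPosition_nil) (hσ.nonempty isLegalPosition_nil)
    (fun n => isOpen_biUnion fun p hp => hσ.isOpen (hS.isLegalPosition_of_mem_treeLevel hp))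
    hS.subset_closure_treeLevel
  obtain ⟨V, hV⟩ := exists_hist_forall_of_step (fun n p => p ∈ treeLevel S n ∧ x ∈ σ p)
    (fun p a => a ∈ S p) ⟨rfl, hx₀⟩ fun n p ⟨hp, hxp⟩ =>
      let ⟨a, ha, hpa, hxa⟩ := hS.exists_mem_treeLevel_succ hσ hp hxp (mem_iInter.1 hx (n + 1))
      ⟨a, ha, hpa, hxa⟩
  exact ⟨V, fun n => hS.subset_choquetMoves _ (hV n).2, x, mem_iInter.2 fun n => (hV n).1.2⟩

end ReplyTree

theorem winningStratI_of_inter_iInter_eq_empty {X : Type} [TopologicalSpace X] {f : ℕ → Set X}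
    (hfo : ∀ n, IsOpen (f n)) (hfd : ∀ n, Dense (f n)) {U : Set X} (hUo : IsOpen U)
    (hUne : U.Nonempty) (hUf : U ∩ ⋂ n, f n = ∅) :
    WinningStratI X fun p => p.getLastD U ∩ f p.length := by
  refine ⟨fun V n hV => ?_, fun V _ => ?_⟩
  · dsimp only
    rw [hist_length]
    cases n with
    | zero => exact ⟨hUo.inter (hfo 0), (hfd 0).inter_open_nonempty U hUo hUne,
        fun m hm => absurd hm (Nat.zero_ne_add_one m)⟩
    | succ m =>
      obtain ⟨hVo, hVne, -⟩ := hV m m.lt_succ_self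
      rw [hist_succ, List.getLastD_concat]
      exact ⟨hVo.inter (hfo _), (hfd _).inter_open_nonempty _ hVo hVne,
        fun k hk => Nat.succ_injective hk ▸ inter_subset_left⟩
  · refine eq_empty_of_subset_empty (hUf ▸ subset_inter ((iInter_subset _ 0).trans
      inter_subset_left) (subset_iInter fun n => (iInter_subset _ n).trans ?_))
    dsimp only
    rw [hist_length]
    exact inter_subset_right

theorem stmt19_general (X : Type) [TopologicalSpace X] :
    BaireSpace X ↔ ¬ ∃ σ : List (Set X) → Set X, WinningStratI X σ := by
  refine ⟨fun _ ⟨σ, hσ⟩ => ?_, fun h => ⟨fun f hfo hfd => ?_⟩⟩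
  · obtain ⟨V, hV, hne⟩ := AnswersLegally.exists_run_nonempty_iInter hσ.1
    exact hne.ne_empty (hσ.2 V fun n _ => hV n)
  · exact dense_iff_inter_open.2 fun U hUo hUne => nonempty_iff_ne_empty.2 fun hUf =>
      h ⟨_, winningStratI_of_inter_iInter_eq_empty hfo hfd hUo hUne hUf⟩

/-- Oxtoby's theorem: a nonempty topological space is Baire iff player I has no
winning strategy in the Choquet game. -/
theorem stmt19 (X : Type) [TopologicalSpace X] [Nonempty X] :
    BaireSpace X ↔ ¬ ∃ σ : List (Set X) → Set X, WinningStratI X σ :=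
  stmt19_general X
end
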